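/- The antiderivative identity: for any S ∈ ℝ, ∫_{-∞}^{S} erfc(t)·erfc(-t)/4 dt = (1/√(2π)) [ erfc(-√2 S)/2 - e^{-S²} erf(S)/√2 + √(π/2) · S · erfc(S)erfc(-S)/2 ]. -/

import Mathlib

/-- The error function `erf(t) = (2/√π) ∫₀ᵗ e^(-s²) ds`. -/
noncomputable def erf (t : ℝ) : ℝ := (2 / Real.sqrt Real.pi) * ∫ s in (0:ℝ)..t, Real.exp (-(s ^ 2))

/-- The complementary error function `erfc(t) = 1 - erf(t)`. -/
noncomputable def erfc (t : ℝ) : ℝ := 1 - erf t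

open Real MeasureTheory Set Filter Topology

lemma gauss_cont : Continuous (fun s : ℝ => Real.exp (-(s ^ 2))) := by continuity

lemma gauss_integrable : Integrable (fun s : ℝ => Real.exp (-(s ^ 2))) := by
  have := integrable_exp_neg_mul_sq (b := 1) one_pos
  simpa using this

lemma erf_hasDerivAt (t : ℝ) :
    HasDerivAt erf ((2 / Real.sqrt Real.pi) * Real.exp (-(t ^ 2))) t := by
  have h := intervalIntegral.integral_hasDerivAt_right
    (f := fun s : ℝ => Real.exp (-(s ^ 2))) (a := (0:ℝ)) (b := t)
    (gauss_cont.intervalIntegrable _ _)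
    (gauss_cont.stronglyMeasurableAtFilter _ _)
    gauss_cont.continuousAt
  exact h.const_mul _

lemma continuous_erf : Continuous erf :=
  continuous_iff_continuousAt.2 fun t => (erf_hasDerivAt t).continuousAt

lemma erf_neg (t : ℝ) : erf (-t) = - erf t := by
  unfold erf
  rw [← mul_neg]
  congr 1
  rw [intervalIntegral.integral_symm, ← neg_neg (0:ℝ)]
  rw [← intervalIntegral.integral_comp_neg (fun s => Real.exp (-(s ^ 2)))]
  simp

lemma integral_gauss_Iic_zero : ∫ s in Iic (0:ℝ), Real.exp (-(s ^ 2)) = Real.sqrt Real.pi / 2 := by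
  have h0 := integral_comp_neg_Iic (0:ℝ) (fun s => Real.exp (-(s ^ 2)))
  simp only [neg_zero, neg_neg, even_two, Even.neg_pow] at h0
  rw [h0]
  have := integral_gaussian_Ioi 1
  simpa using this

lemma erfc_neg_rep (t : ℝ) :
    erfc (-t) = (2 / Real.sqrt Real.pi) * ∫ s in Iic t, Real.exp (-(s ^ 2)) := by
  have key : (∫ s in Iic t, Real.exp (-(s ^ 2))) - ∫ s in Iic (0:ℝ), Real.exp (-(s ^ 2))
      = ∫ s in (0:ℝ)..t, Real.exp (-(s ^ 2)) :=
    intervalIntegral.integral_Iic_sub_Iic gauss_integrable.integrableOn gauss_integrable.integrableOn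
  have hp : Real.sqrt Real.pi > 0 := Real.sqrt_pos.2 Real.pi_pos
  unfold erfc
  rw [erf_neg]
  unfold erf
  rw [← key, integral_gauss_Iic_zero]
  field_simp
  ring

lemma gauss_le_exp (s : ℝ) : Real.exp (-(s ^ 2)) ≤ Real.exp s * Real.exp 2 := by
  rw [← Real.exp_add]
  apply Real.exp_le_exp.2
  nlinarith [sq_nonneg (s + 1)]

lemma gauss_Iic_le (t : ℝ) : (∫ s in Iic t, Real.exp (-(s ^ 2))) ≤ Real.exp t * Real.exp 2 := by
  have h1 : (∫ s in Iic t, Real.exp (-(s ^ 2))) ≤ ∫ s in Iic t, Real.exp s * Real.exp 2 := by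
    apply setIntegral_mono_on gauss_integrable.integrableOn
      ((integrableOn_exp_Iic t).mul_const _) measurableSet_Iic
    exact fun s _ => gauss_le_exp s
  calc (∫ s in Iic t, Real.exp (-(s ^ 2))) ≤ ∫ s in Iic t, Real.exp s * Real.exp 2 := h1
    _ = Real.exp t * Real.exp 2 := by rw [integral_mul_const, integral_exp_Iic]

lemma erfc_neg_nonneg (t : ℝ) : 0 ≤ erfc (-t) := by
  rw [erfc_neg_rep]
  have : 0 ≤ ∫ s in Iic t, Real.exp (-(s ^ 2)) :=
    setIntegral_nonneg measurableSet_Iic fun s _ => (Real.exp_pos _).le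
  positivity

lemma erfc_nonneg (t : ℝ) : 0 ≤ erfc t := by
  have := erfc_neg_nonneg (-t); rwa [neg_neg] at this

lemma erfc_le_two (t : ℝ) : erfc t ≤ 2 := by
  have h := erfc_nonneg (-t)
  unfold erfc at *
  rw [erf_neg] at h
  linarith

lemma erfc_neg_le (t : ℝ) : erfc (-t) ≤ (2 / Real.sqrt Real.pi) * (Real.exp t * Real.exp 2) := by
  rw [erfc_neg_rep]
  have hp : (0:ℝ) < 2 / Real.sqrt Real.pi := by positivity
  exact mul_le_mul_of_nonneg_left (gauss_Iic_le t) hp.le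

lemma tendsto_exp_shift : Tendsto (fun t : ℝ => Real.exp t * Real.exp 2) atBot (𝓝 0) := by
  simpa using Real.tendsto_exp_atBot.mul_const (Real.exp 2)

lemma tendsto_erfc_neg : Tendsto (fun t : ℝ => erfc (-t)) atBot (𝓝 0) := by
  apply squeeze_zero (fun t => erfc_neg_nonneg t) (fun t => erfc_neg_le t)
  have := tendsto_exp_shift.const_mul (2 / Real.sqrt Real.pi)
  simpa using this

lemma tendsto_erf_atBot : Tendsto erf atBot (𝓝 (-1)) := by
  have h : ∀ t : ℝ, erf t = erfc (-t) - 1 := by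
    intro t; unfold erfc; rw [erf_neg]; ring
  simp only [funext h]
  simpa using tendsto_erfc_neg.sub_const 1

lemma tendsto_mul_erfc_neg : Tendsto (fun t : ℝ => t * erfc (-t)) atBot (𝓝 0) := by
  apply squeeze_zero_norm' (a := fun t : ℝ => (2 / Real.sqrt Real.pi) * (2 * Real.exp (t/2) * Real.exp 2))
  · filter_upwards [eventually_le_atBot (-1 : ℝ)] with t ht
    have h1 : 0 ≤ erfc (-t) := erfc_neg_nonneg t
    have h2 : erfc (-t) ≤ (2 / Real.sqrt Real.pi) * (Real.exp t * Real.exp 2) := erfc_neg_le t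
    have h3 : -t ≤ 2 * Real.exp (-t/2) := by
      have := Real.add_one_le_exp (-t/2)
      nlinarith [Real.exp_pos (-t/2)]
    have h4 : ‖t * erfc (-t)‖ = (-t) * erfc (-t) := by
      rw [Real.norm_eq_abs, abs_mul, abs_of_nonneg h1, abs_of_nonpos (by linarith : t ≤ 0)]
    rw [h4]
    have h5 : (-t) * erfc (-t) ≤ (2 * Real.exp (-t/2)) * ((2 / Real.sqrt Real.pi) * (Real.exp t * Real.exp 2)) := by
      apply mul_le_mul h3 h2 h1
      positivity
    calc (-t) * erfc (-t) ≤ (2 * Real.exp (-t/2)) * ((2 / Real.sqrt Real.pi) * (Real.exp t * Real.exp 2)) := h5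
      _ = (2 / Real.sqrt Real.pi) * (2 * (Real.exp (-t/2) * Real.exp t) * Real.exp 2) := by ring
      _ = (2 / Real.sqrt Real.pi) * (2 * Real.exp (t/2) * Real.exp 2) := by
          rw [← Real.exp_add]; ring_nf
  · have h : Tendsto (fun t : ℝ => Real.exp (t/2)) atBot (𝓝 0) :=
      Real.tendsto_exp_atBot.comp (tendsto_id.atBot_div_const two_pos)
    have := ((h.const_mul 2).mul_const (Real.exp 2)).const_mul (2 / Real.sqrt Real.pi)
    simpa using this

lemma erfc_hasDerivAt (t : ℝ) :
    HasDerivAt erfc (-((2 / Real.sqrt Real.pi) * Real.exp (-(t ^ 2)))) t :=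
  (erf_hasDerivAt t).const_sub 1

noncomputable def F (S : ℝ) : ℝ :=
  (1 / Real.sqrt (2 * Real.pi)) *
    (erfc (-(Real.sqrt 2 * S)) / 2 - Real.exp (-(S ^ 2)) * erf S / Real.sqrt 2
      + Real.sqrt (Real.pi / 2) * S * (erfc S * erfc (-S)) / 2)

lemma F_hasDerivAt (x : ℝ) : HasDerivAt F (erfc x * erfc (-x) / 4) x := by
  have hp : (0:ℝ) < Real.sqrt Real.pi := Real.sqrt_pos.2 Real.pi_pos
  have hq : (0:ℝ) < Real.sqrt 2 := Real.sqrt_pos.2 two_pos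
  have h_inner : HasDerivAt (fun S : ℝ => -(Real.sqrt 2 * S)) (-(Real.sqrt 2 * 1)) x :=
    ((hasDerivAt_id x).const_mul _).neg
  have h1 : HasDerivAt (fun S : ℝ => erfc (-(Real.sqrt 2 * S)))
      (-((2 / Real.sqrt Real.pi) * Real.exp (-((-(Real.sqrt 2 * x)) ^ 2))) * (-(Real.sqrt 2 * 1))) x :=
    (erfc_hasDerivAt _).comp x h_inner
  have h2 : HasDerivAt (fun S : ℝ => Real.exp (-(S ^ 2)))
      (Real.exp (-(x ^ 2)) * (-(2 * x ^ 1))) x :=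
    (Real.hasDerivAt_exp _).comp x ((hasDerivAt_pow 2 x).neg)
  have h3 := erf_hasDerivAt x
  have h4a := erfc_hasDerivAt x
  have h4b : HasDerivAt (fun S : ℝ => erfc (-S))
      (-((2 / Real.sqrt Real.pi) * Real.exp (-((-x) ^ 2))) * (-1)) x :=
    (erfc_hasDerivAt _).comp x (hasDerivAt_neg x)
  have hS : HasDerivAt (fun S : ℝ => Real.sqrt (Real.pi / 2) * S) (Real.sqrt (Real.pi / 2) * 1) x :=
    (hasDerivAt_id x).const_mul _
  have total := ((((h1.div_const 2).sub ((h2.mul h3).div_const (Real.sqrt 2))).add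
    ((hS.mul (h4a.mul h4b)).div_const 2)).const_mul (1 / Real.sqrt (2 * Real.pi)))
  convert total using 1
  · rfl
  · rfl
  · rfl
  have e1 : Real.exp (-((-(Real.sqrt 2 * x)) ^ 2)) = Real.exp (-(x ^ 2)) ^ 2 := by
    rw [← Real.exp_nat_mul]
    congr 1
    have : (-(Real.sqrt 2 * x)) ^ 2 = Real.sqrt 2 ^ 2 * x ^ 2 := by ring
    rw [this, Real.sq_sqrt two_pos.le]
    push_cast; ring
  have e2 : (-x : ℝ) ^ 2 = x ^ 2 := by ring
  have e3 : Real.sqrt (2 * Real.pi) = Real.sqrt 2 * Real.sqrt Real.pi :=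
    Real.sqrt_mul two_pos.le _
  have e4 : Real.sqrt (Real.pi / 2) = Real.sqrt Real.pi / Real.sqrt 2 :=
    Real.sqrt_div Real.pi_pos.le 2
  have hq2 : Real.sqrt 2 ^ 2 = 2 := Real.sq_sqrt two_pos.le
  have hu : erfc (-x) = 1 + erf x := by unfold erfc; rw [erf_neg]; ring
  have hv : erfc x = 1 - erf x := rfl
  rw [Pi.mul_apply]
  rw [e1, e2, e3, e4, hu, hv]
  set u := erf x
  set E := Real.exp (-(x ^ 2))
  set p := Real.sqrt Real.pi
  set q := Real.sqrt 2
  field_simp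
  linear_combination (-2*p^2*u^2 + 2*p^2 - 8*E^2) * hq2

lemma tendsto_erfc_atBot : Tendsto erfc atBot (𝓝 2) := by
  have : erfc = fun t => 1 - erf t := rfl
  rw [this]
  have h := (tendsto_const_nhds (α := ℝ) (f := atBot) (x := (1:ℝ))).sub tendsto_erf_atBot
  norm_num at h
  exact h

lemma tendsto_gauss_exp : Tendsto (fun S : ℝ => Real.exp (-(S ^ 2))) atBot (𝓝 0) :=
  squeeze_zero (fun t => (Real.exp_pos _).le) (fun t => gauss_le_exp t) tendsto_exp_shift

lemma tendsto_F : Tendsto F atBot (𝓝 0) := by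
  have hA : Tendsto (fun S : ℝ => erfc (-(Real.sqrt 2 * S))) atBot (𝓝 0) := by
    have hmul : Tendsto (fun S : ℝ => Real.sqrt 2 * S) atBot atBot :=
      Tendsto.const_mul_atBot (Real.sqrt_pos.2 two_pos) tendsto_id
    exact tendsto_erfc_neg.comp hmul
  have hB : Tendsto (fun S : ℝ => Real.exp (-(S ^ 2)) * erf S / Real.sqrt 2) atBot (𝓝 0) := by
    have := (tendsto_gauss_exp.mul tendsto_erf_atBot).div_const (Real.sqrt 2)
    simpa using this
  have hC : Tendsto (fun S : ℝ => Real.sqrt (Real.pi / 2) * S * (erfc S * erfc (-S))) atBot (𝓝 0) := by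
    have heq : (fun S : ℝ => Real.sqrt (Real.pi / 2) * S * (erfc S * erfc (-S)))
        = fun S : ℝ => Real.sqrt (Real.pi / 2) * ((S * erfc (-S)) * erfc S) := by
      funext S; ring
    rw [heq]
    have := ((tendsto_mul_erfc_neg.mul tendsto_erfc_atBot).const_mul (Real.sqrt (Real.pi / 2)))
    simpa using this
  have total := (((hA.div_const 2).sub hB).add (hC.div_const 2)).const_mul
    (1 / Real.sqrt (2 * Real.pi))
  unfold F
  simpa using total

lemma integrand_integrable (S : ℝ) :
    IntegrableOn (fun t => erfc t * erfc (-t) / 4) (Iic S) := by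
  have hp : (0:ℝ) < Real.sqrt Real.pi := Real.sqrt_pos.2 Real.pi_pos
  have hcont : Continuous fun t : ℝ => erfc t * erfc (-t) / 4 := by
    have h1 : Continuous erfc := continuous_const.sub continuous_erf
    exact ((h1.mul (h1.comp continuous_neg)).div_const 4)
  apply Integrable.mono' (g := fun t => Real.exp t * (Real.exp 2 / Real.sqrt Real.pi))
    (((integrableOn_exp_Iic S).mul_const _))
    hcont.aestronglyMeasurable.restrict
  filter_upwards with t
  have h1 := erfc_nonneg t
  have h2 := erfc_neg_nonneg t
  have h3 := erfc_le_two t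
  have h4 := erfc_neg_le t
  rw [Real.norm_eq_abs, abs_of_nonneg (by positivity)]
  have h5 : erfc t * erfc (-t) ≤ 2 * ((2 / Real.sqrt Real.pi) * (Real.exp t * Real.exp 2)) :=
    mul_le_mul h3 h4 h2 (by norm_num)
  have := Real.exp_pos t
  rw [div_le_iff₀ (by norm_num : (0:ℝ) < 4)]
  calc erfc t * erfc (-t) ≤ 2 * ((2 / Real.sqrt Real.pi) * (Real.exp t * Real.exp 2)) := h5
    _ = Real.exp t * (Real.exp 2 / Real.sqrt Real.pi) * 4 := by field_simp; ring


/-- For any `S ∈ ℝ`,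
`∫_{-∞}^{S} erfc(t)·erfc(-t)/4 dt
  = (1/√(2π)) [ erfc(-√2 S)/2 - e^{-S²} erf(S)/√2 + √(π/2)·S·erfc(S)erfc(-S)/2 ]`. -/
theorem integral_erfc_mul_erfc_Iic (S : ℝ) :
    ∫ t in Set.Iic S, erfc t * erfc (-t) / 4
      = (1 / Real.sqrt (2 * Real.pi)) *
        (erfc (-(Real.sqrt 2 * S)) / 2 - Real.exp (-(S ^ 2)) * erf S / Real.sqrt 2
          + Real.sqrt (Real.pi / 2) * S * (erfc S * erfc (-S)) / 2) := by
  have key := integral_Iic_of_hasDerivAt_of_tendsto' (a := S) (f := F)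
    (f' := fun t => erfc t * erfc (-t) / 4)
    (fun x _ => F_hasDerivAt x) (integrand_integrable S) tendsto_F
  rw [key]
  unfold F
  ring
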